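/- Let a, b, ω > 0, −a²b < σ < 0, μ ∈ (0, 1), and ε ∈ (0, 1), and set γ_μ = √(a² + (1−μ)σ/b). There exists a class-𝒦𝓛 function β : [0,∞) × [0,∞) → [0,∞) such that the following holds: for every continuous input u = (u₁, u₂) : [0, ∞) → ℝ² with sup_{t≥0} ‖u(t)‖ < (1−ε)·μ·|σ|·√(a − γ_μ) and every solution φ = (x, y) : [0, ∞) → ℝ² of the forced bistable oscillator with x(0)² + y(0)² < a − γ_μ, one has ‖φ(t)‖ ≤ β(‖φ(0)‖, t) + (1/((1−ε)·μ·|σ|))·sup_{t≥0} ‖u(t)‖ for all t ≥ 0. -/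

import Mathlib

/-!
Along a solution the squared radius `w = x² + y²` obeys `ẇ = 2 w g(w) + 2 ⟨φ, u⟩`: the rotation
drops out. With `M = a - γ_μ` one has `g(s) ≤ μσ = -k` for `s ≤ M`, where `k = μ|σ|`. The bound
on the input makes `ẇ < 0` on the circle `w = M`, so the disc `w ≤ M` is forward invariant, and
inside it AM–GM turns `ẇ ≤ -2kw + 2√w U` into `ẇ ≤ k ((U/k)² - w)`. Grönwall's inequality gives
`w(t) ≤ w(0) e^{-kt} + (U/k)²`, hence `‖φ(t)‖ ≤ ‖φ(0)‖ e^{-kt/2} + U/k`.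
-/

open Real Set Filter Topology

def IsClassKL (β : ℝ → ℝ → ℝ) : Prop :=
  (∀ r s, 0 ≤ r → 0 ≤ s → 0 ≤ β r s) ∧
  (∀ s, 0 ≤ s → ContinuousOn (fun r => β r s) (Ici 0) ∧
    StrictMonoOn (fun r => β r s) (Ici 0) ∧ β 0 s = 0) ∧
  (∀ r, 0 ≤ r → AntitoneOn (fun s => β r s) (Ici 0) ∧
    Tendsto (fun s => β r s) atTop (𝓝 0))

theorem isClassKL_mul_exp {c : ℝ} (hc : 0 < c) : IsClassKL fun r s => r * exp (-c * s) := by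
  refine ⟨fun r s hr _ => by positivity, fun s _ => ⟨by fun_prop, ?_, by simp⟩,
    fun r hr => ⟨?_, ?_⟩⟩
  · exact fun r₁ _ r₂ _ h => mul_lt_mul_of_pos_right h (exp_pos _)
  · exact fun s₁ _ s₂ _ h => mul_le_mul_of_nonneg_left (exp_le_exp.2 (by nlinarith)) hr
  · simpa using
      (tendsto_exp_atBot.comp (tendsto_id.const_mul_atTop_of_neg (neg_neg_of_pos hc))).const_mul r

theorem mul_add_mul_le_sqrt_mul_sqrt (x y u v : ℝ) :
    x * u + y * v ≤ √(x ^ 2 + y ^ 2) * √(u ^ 2 + v ^ 2) := by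
  simpa [Fin.sum_univ_two] using Real.sum_mul_le_sqrt_mul_sqrt Finset.univ ![x, y] ![u, v]

theorem hasDerivAt_sq_add_sq_of_rotation {x y : ℝ → ℝ} {ω G u v t : ℝ}
    (hx : HasDerivAt x (-ω * y t + x t * G + u) t) (hy : HasDerivAt y (ω * x t + y t * G + v) t) :
    HasDerivAt (fun s => x s ^ 2 + y s ^ 2)
      (2 * (x t ^ 2 + y t ^ 2) * G + 2 * (x t * u + y t * v)) t :=
  ((hx.fun_pow 2).fun_add (hy.fun_pow 2)).congr_deriv (by ring)

theorem le_of_deriv_neg_on_boundary {w w' : ℝ → ℝ} {M : ℝ}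
    (hw : ∀ t ≥ 0, HasDerivAt w (w' t) t) (h0 : w 0 ≤ M)
    (hM : ∀ t ≥ 0, w t = M → w' t < 0) :
    ∀ t ≥ 0, w t ≤ M := by
  intro t ht
  exact image_le_of_deriv_right_lt_deriv_boundary (B := fun _ => M) (B' := 0)
    (fun s hs => (hw s hs.1).continuousAt.continuousWithinAt)
    (fun s hs => (hw s hs.1).hasDerivWithinAt) h0 (fun _ => hasDerivAt_const _ _)
    (fun s hs => hM s hs.1) ⟨ht, le_rfl⟩

theorem le_mul_exp_add_of_deriv_le {w w' : ℝ → ℝ} {k c : ℝ} (hk : 0 < k) (hc : 0 ≤ c)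
    (hw : ∀ t ≥ 0, HasDerivAt w (w' t) t) (hbound : ∀ t ≥ 0, w' t ≤ k * (c - w t)) :
    ∀ t ≥ 0, w t ≤ w 0 * exp (-k * t) + c := by
  intro t ht
  have h := le_gronwallBound_of_liminf_deriv_right_le (δ := w 0) (K := -k) (ε := k * c)
    (fun s hs => (hw s hs.1).continuousAt.continuousWithinAt)
    (fun s hs _ hr => (hw s hs.1).hasDerivWithinAt.liminf_right_slope_le hr) le_rfl
    (fun s hs => (hbound s hs.1).trans_eq (by ring)) t ⟨ht, le_rfl⟩
  rw [gronwallBound_of_K_ne_0 (neg_ne_zero.2 hk.ne'), sub_zero] at h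
  have hdecay : 0 ≤ c * exp (-k * t) := by positivity
  calc w t ≤ w 0 * exp (-k * t) + k * c / -k * (exp (-k * t) - 1) := h
    _ = w 0 * exp (-k * t) + c - c * exp (-k * t) := by field_simp; ring
    _ ≤ w 0 * exp (-k * t) + c := by linarith

theorem sqrt_le_sqrt_mul_exp_add {w w₀ k t D : ℝ} (hw₀ : 0 ≤ w₀) (hD : 0 ≤ D)
    (h : w ≤ w₀ * exp (-k * t) + D ^ 2) : √w ≤ √w₀ * exp (-(k / 2) * t) + D := by
  rw [sqrt_le_left (by positivity)]
  have hsq : (√w₀ * exp (-(k / 2) * t)) ^ 2 = w₀ * exp (-k * t) := by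
    rw [mul_pow, sq_sqrt hw₀, ← exp_nat_mul]
    ring_nf
  nlinarith [mul_nonneg (mul_nonneg (sqrt_nonneg w₀) (exp_pos (-(k / 2) * t)).le) hD]

theorem bistable_le_of_le_sub_sqrt {a b σ μ s : ℝ} (hb : 0 < b)
    (hs : s ≤ a - √(a ^ 2 + (1 - μ) * σ / b)) :
    σ + 2 * a * b * s - b * s ^ 2 ≤ μ * σ := by
  set q := a ^ 2 + (1 - μ) * σ / b with hq_def
  -- `q ≤ √q ^ 2` holds also when `q < 0`
  have hq : q ≤ (a - s) ^ 2 :=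
    calc q ≤ √q ^ 2 := by rw [sq_sqrt']; exact le_max_left _ _
      _ ≤ (a - s) ^ 2 := pow_le_pow_left₀ (sqrt_nonneg _) (by linarith) 2
  have key : σ + 2 * a * b * s - b * s ^ 2 - μ * σ = b * (q - (a - s) ^ 2) := by
    rw [hq_def]; field_simp; ring
  nlinarith [mul_nonneg hb.le (sub_nonneg.2 hq)]

theorem bistable_sq_radius_le {a b ω σ μ U : ℝ} {x y u₁ u₂ : ℝ → ℝ}
    (hb : 0 < b) (hσ : σ < 0) (hμ : 0 < μ)
    (hU : ∀ t ≥ 0, √(u₁ t ^ 2 + u₂ t ^ 2) ≤ U)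
    (hUlt : U < μ * |σ| * √(a - √(a ^ 2 + (1 - μ) * σ / b)))
    (hx : ∀ t ≥ 0, HasDerivAt x (-ω * y t + x t * (σ + 2 * a * b * (x t ^ 2 + y t ^ 2)
      - b * (x t ^ 2 + y t ^ 2) ^ 2) + u₁ t) t)
    (hy : ∀ t ≥ 0, HasDerivAt y (ω * x t + y t * (σ + 2 * a * b * (x t ^ 2 + y t ^ 2)
      - b * (x t ^ 2 + y t ^ 2) ^ 2) + u₂ t) t)
    (h0 : x 0 ^ 2 + y 0 ^ 2 < a - √(a ^ 2 + (1 - μ) * σ / b)) :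
    ∀ t ≥ 0, x t ^ 2 + y t ^ 2 ≤
      (x 0 ^ 2 + y 0 ^ 2) * exp (-(μ * |σ|) * t) + (U / (μ * |σ|)) ^ 2 := by
  set M := a - √(a ^ 2 + (1 - μ) * σ / b)
  set k := μ * |σ| with hk_def
  set w := fun t => x t ^ 2 + y t ^ 2
  have hk : 0 < k := mul_pos hμ (abs_pos.2 hσ.ne)
  have hμσ : μ * σ = -k := by rw [hk_def, abs_of_neg hσ]; ring
  have hw : ∀ t ≥ 0, HasDerivAt w
      (2 * w t * (σ + 2 * a * b * w t - b * w t ^ 2) + 2 * (x t * u₁ t + y t * u₂ t)) t :=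
    fun t ht => hasDerivAt_sq_add_sq_of_rotation (hx t ht) (hy t ht)
  have hw_nonneg : ∀ t, 0 ≤ w t := fun t => by positivity
  have hinput : ∀ t ≥ 0, x t * u₁ t + y t * u₂ t ≤ √(w t) * U := fun t ht =>
    (mul_add_mul_le_sqrt_mul_sqrt _ _ _ _).trans (mul_le_mul_of_nonneg_left (hU t ht) (sqrt_nonneg _))
  have hM : 0 < M := (hw_nonneg 0).trans_lt h0
  have hinv : ∀ t ≥ 0, w t ≤ M := by
    refine le_of_deriv_neg_on_boundary hw h0.le fun t ht hwt => ?_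
    have hg := bistable_le_of_le_sub_sqrt (s := w t) hb hwt.le
    have hin := hinput t ht
    rw [hwt, hμσ] at hg
    rw [hwt] at hin ⊢
    have hUM : √M * U < k * M :=
      calc √M * U < √M * (k * √M) := mul_lt_mul_of_pos_left hUlt (sqrt_pos.2 hM)
        _ = k * M := by rw [mul_left_comm, mul_self_sqrt hM.le]
    linarith [mul_le_mul_of_nonneg_left hg (by positivity : 0 ≤ 2 * M)]
  refine le_mul_exp_add_of_deriv_le hk (sq_nonneg _) hw fun t ht => ?_
  have hg := bistable_le_of_le_sub_sqrt hb (hinv t ht)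
  rw [hμσ] at hg
  have hamgm : 2 * (√(w t) * U) ≤ k * w t + k * (U / k) ^ 2 := by
    have h := mul_nonneg hk.le (sq_nonneg (√(w t) - U / k))
    have hsq : √(w t) ^ 2 = w t := sq_sqrt (hw_nonneg t)
    field_simp at h ⊢
    nlinarith
  linarith [mul_le_mul_of_nonneg_left hg (by positivity : 0 ≤ 2 * w t), hinput t ht]

theorem stmt_14_general (a b ω σ μ ε : ℝ) (hb : 0 < b)
    (hσ2 : σ < 0)
    (hμ : μ ∈ Set.Ioo (0 : ℝ) 1) (hε : ε ∈ Set.Ioo (0 : ℝ) 1) :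
    ∃ β : ℝ → ℝ → ℝ,
      (∀ r s, 0 ≤ r → 0 ≤ s → 0 ≤ β r s) ∧
      (∀ s, 0 ≤ s → ContinuousOn (fun r => β r s) (Set.Ici 0) ∧
        StrictMonoOn (fun r => β r s) (Set.Ici 0) ∧ β 0 s = 0) ∧
      (∀ r, 0 ≤ r → AntitoneOn (fun s => β r s) (Set.Ici 0) ∧
        Filter.Tendsto (fun s => β r s) Filter.atTop (nhds 0)) ∧
      (∀ u1 u2 : ℝ → ℝ, Continuous u1 → Continuous u2 →
        ∀ U : ℝ, (∀ t ≥ (0 : ℝ), Real.sqrt (u1 t ^ 2 + u2 t ^ 2) ≤ U) →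
        U < (1 - ε) * μ * |σ| * Real.sqrt (a - Real.sqrt (a ^ 2 + (1 - μ) * σ / b)) →
        ∀ x y : ℝ → ℝ,
        (∀ t ≥ (0 : ℝ), HasDerivAt x
          (-ω * y t + x t * (σ + 2 * a * b * (x t ^ 2 + y t ^ 2)
            - b * (x t ^ 2 + y t ^ 2) ^ 2) + u1 t) t) →
        (∀ t ≥ (0 : ℝ), HasDerivAt y
          (ω * x t + y t * (σ + 2 * a * b * (x t ^ 2 + y t ^ 2)
            - b * (x t ^ 2 + y t ^ 2) ^ 2) + u2 t) t) →
        x 0 ^ 2 + y 0 ^ 2 < a - Real.sqrt (a ^ 2 + (1 - μ) * σ / b) →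
        ∀ t ≥ (0 : ℝ), Real.sqrt (x t ^ 2 + y t ^ 2) ≤
          β (Real.sqrt (x 0 ^ 2 + y 0 ^ 2)) t + U / ((1 - ε) * μ * |σ|)) := by
  obtain ⟨hμ0, -⟩ := hμ
  obtain ⟨hε0, hε1⟩ := hε
  have hk : 0 < μ * |σ| := mul_pos hμ0 (abs_pos.2 hσ2.ne)
  have hεk : 0 < (1 - ε) * μ * |σ| := by rw [mul_assoc]; exact mul_pos (by linarith) hk
  have hεk_le : (1 - ε) * μ * |σ| ≤ μ * |σ| := by nlinarith
  obtain ⟨hβ_nonneg, hβ_r, hβ_s⟩ := isClassKL_mul_exp (half_pos hk)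
  refine ⟨_, hβ_nonneg, hβ_r, hβ_s, fun u1 u2 _ _ U hU hUlt x y hx hy h0 t ht => ?_⟩
  have hU0 : 0 ≤ U := (sqrt_nonneg _).trans (hU 0 le_rfl)
  have hUlt' : U < μ * |σ| * √(a - √(a ^ 2 + (1 - μ) * σ / b)) :=
    hUlt.trans_le (mul_le_mul_of_nonneg_right hεk_le (sqrt_nonneg _))
  calc √(x t ^ 2 + y t ^ 2)
      ≤ √(x 0 ^ 2 + y 0 ^ 2) * exp (-(μ * |σ| / 2) * t) + U / (μ * |σ|) :=
        sqrt_le_sqrt_mul_exp_add (by positivity) (by positivity)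
          (bistable_sq_radius_le hb hσ2 hμ0 hU hUlt' hx hy h0 t ht)
    _ ≤ _ := by gcongr

/-- input-to-state stability of the forced bistable oscillator
with a class-𝒦𝓛 transient bound. -/
theorem stmt_14 (a b ω σ μ ε : ℝ) (ha : 0 < a) (hb : 0 < b) (hω : 0 < ω)
    (hσ1 : -a ^ 2 * b < σ) (hσ2 : σ < 0)
    (hμ : μ ∈ Set.Ioo (0 : ℝ) 1) (hε : ε ∈ Set.Ioo (0 : ℝ) 1) :
    ∃ β : ℝ → ℝ → ℝ,
      (∀ r s, 0 ≤ r → 0 ≤ s → 0 ≤ β r s) ∧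
      (∀ s, 0 ≤ s → ContinuousOn (fun r => β r s) (Set.Ici 0) ∧
        StrictMonoOn (fun r => β r s) (Set.Ici 0) ∧ β 0 s = 0) ∧
      (∀ r, 0 ≤ r → AntitoneOn (fun s => β r s) (Set.Ici 0) ∧
        Filter.Tendsto (fun s => β r s) Filter.atTop (nhds 0)) ∧
      (∀ u1 u2 : ℝ → ℝ, Continuous u1 → Continuous u2 →
        ∀ U : ℝ, (∀ t ≥ (0 : ℝ), Real.sqrt (u1 t ^ 2 + u2 t ^ 2) ≤ U) →
        U < (1 - ε) * μ * |σ| * Real.sqrt (a - Real.sqrt (a ^ 2 + (1 - μ) * σ / b)) →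
        ∀ x y : ℝ → ℝ,
        (∀ t ≥ (0 : ℝ), HasDerivAt x
          (-ω * y t + x t * (σ + 2 * a * b * (x t ^ 2 + y t ^ 2)
            - b * (x t ^ 2 + y t ^ 2) ^ 2) + u1 t) t) →
        (∀ t ≥ (0 : ℝ), HasDerivAt y
          (ω * x t + y t * (σ + 2 * a * b * (x t ^ 2 + y t ^ 2)
            - b * (x t ^ 2 + y t ^ 2) ^ 2) + u2 t) t) →
        x 0 ^ 2 + y 0 ^ 2 < a - Real.sqrt (a ^ 2 + (1 - μ) * σ / b) →
        ∀ t ≥ (0 : ℝ), Real.sqrt (x t ^ 2 + y t ^ 2) ≤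
          β (Real.sqrt (x 0 ^ 2 + y 0 ^ 2)) t + U / ((1 - ε) * μ * |σ|)) :=
  stmt_14_general a b ω σ μ ε hb hσ2 hμ hε
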